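/- arXiv:2009.12932 — 2 statements merged into one kernel-verified Lean document; each statement's English description precedes it below -/
import Mathlib

section
/- With g_τ as above, the disease-free state 0 is asymptotically stable for the l-periodic system p_{τ+1} = g_τ(p_τ) (with g_{τ+l} = g_τ) whenever the spectral radius of S = S_{l-1} ⋯ S_0 is strictly less than 1, where S_τ = (1-μ)I + Λ^{(τ)}. -/
open Matrix Filter Topology
open scoped NNReal ENNReal

/-- The spectral radius of a real square matrix: the supremum of the moduli of its complex
eigenvalues. -/
noncomputable def specRad {m : Type*} [Fintype m] [DecidableEq m]
    (M : Matrix m m ℝ) : ℝ :=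
  sSup ((fun z : ℂ => ‖z‖) '' spectrum ℂ (M.map (Complex.ofReal ·)))

/-- The one-step SIS update map: `(g p)_i = 1 - μ pᵢ - (1 - pᵢ) ∏ⱼ (1 - λᵢⱼ pⱼ)`. -/
noncomputable def sisMap (N : ℕ) (μ : ℝ) (lam : Fin N → Fin N → ℝ) :
    (Fin N → ℝ) → (Fin N → ℝ) :=
  fun p i => 1 - μ * p i - (1 - p i) * ∏ j : Fin N, (1 - lam i j * p j)

section SpectralLemma

attribute [local instance] Matrix.linftyOpNormedRing Matrix.linftyOpNormedAlgebra

private lemma L1 {N : ℕ} (S : Matrix (Fin N) (Fin N) ℝ) (h : specRad S < 1) :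
    ∃ r : ℝ, 0 < r ∧ r < 1 ∧ ∃ m : ℕ, 1 ≤ m ∧ ∀ i, ∑ j, |(S ^ m) i j| ≤ r ^ m := by
  set A : Matrix (Fin N) (Fin N) ℂ := S.map (Complex.ofReal ·) with hA
  -- spectrum bounded
  have hcpt : IsCompact (spectrum ℂ A) := spectrum.isCompact A
  obtain ⟨R, hR⟩ := (isBounded_iff_forall_norm_le).mp hcpt.isBounded
  have hbdd : BddAbove ((fun z : ℂ => ‖z‖) '' spectrum ℂ A) := by
    refine ⟨R, ?_⟩
    rintro x ⟨z, hz, rfl⟩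
    simpa using hR z hz
  have habs : ∀ z ∈ spectrum ℂ A, ‖z‖ ≤ specRad S := by
    intro z hz
    exact le_csSup hbdd ⟨z, hz, rfl⟩
  have hsr : spectralRadius ℂ A < 1 := by
    have h1 : spectralRadius ℂ A ≤ ENNReal.ofReal (specRad S) := by
      refine iSup₂_le fun z hz => ?_
      rw [← ENNReal.ofReal_coe_nnreal, coe_nnnorm]
      exact ENNReal.ofReal_le_ofReal (by simpa using habs z hz)
    exact h1.trans_lt (by exact_mod_cast ENNReal.ofReal_lt_one.mpr h)
  obtain ⟨r1, hρr1, hr11⟩ := ENNReal.lt_iff_exists_nnreal_btwn.mp hsr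
  have hr1pos : (0:ℝ≥0) < r1 :=
    ENNReal.coe_pos.mp (lt_of_le_of_lt bot_le hρr1)
  have hgel := spectrum.pow_nnnorm_pow_one_div_tendsto_nhds_spectralRadius A
  have hev : ∀ᶠ n : ℕ in atTop, ((‖A ^ n‖₊ : ℝ≥0∞) ^ (1 / (n:ℝ))) < (r1 : ℝ≥0∞) :=
    hgel.eventually_lt_const hρr1
  obtain ⟨n0, hn0⟩ := hev.exists_forall_of_atTop
  set m : ℕ := max n0 1 with hm
  have hmn : 1 ≤ m := le_max_right _ _
  have hlt : (‖A ^ m‖₊ : ℝ≥0∞) < (r1 : ℝ≥0∞) ^ (m : ℕ) := by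
    have h1 := hn0 m (le_max_left _ _)
    have hm0 : (m : ℝ) ≠ 0 := Nat.cast_ne_zero.mpr (by omega)
    calc (‖A ^ m‖₊ : ℝ≥0∞) = ((‖A ^ m‖₊ : ℝ≥0∞) ^ (1 / (m:ℝ))) ^ (m:ℝ) := by
          rw [← ENNReal.rpow_mul, one_div, inv_mul_cancel₀ hm0, ENNReal.rpow_one]
      _ < (r1 : ℝ≥0∞) ^ (m:ℝ) := by
          apply ENNReal.rpow_lt_rpow h1 (by positivity)
      _ = (r1 : ℝ≥0∞) ^ (m : ℕ) := by rw [ENNReal.rpow_natCast]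
  have hnorm : ‖A ^ m‖ < (r1 : ℝ) ^ m := by
    have := hlt
    rw [← ENNReal.coe_pow, ENNReal.coe_lt_coe] at this
    exact_mod_cast this
  refine ⟨r1, by exact_mod_cast hr1pos, by exact_mod_cast hr11, m, hmn, ?_⟩
  intro i
  have hrow : ∑ j, ‖(A ^ m) i j‖₊ ≤ ‖A ^ m‖₊ := by
    rw [Matrix.linfty_opNNNorm_def]
    exact Finset.le_sup (f := fun i => ∑ j, ‖(A ^ m) i j‖₊) (Finset.mem_univ i)
  have hAm : A ^ m = (S ^ m).map (Complex.ofReal ·) := by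
    have : A = (Complex.ofRealHom.mapMatrix : Matrix (Fin N) (Fin N) ℝ →+* _) S := rfl
    rw [this, ← map_pow]
    rfl
  have : ∑ j, |(S ^ m) i j| = ∑ j, ‖(A ^ m) i j‖ := by
    apply Finset.sum_congr rfl
    intro j _
    rw [hAm]
    simp [Matrix.map_apply]
  rw [this]
  have h2 : ∑ j, ‖(A ^ m) i j‖ ≤ ‖A ^ m‖ := by
    have := NNReal.coe_le_coe.mpr hrow
    simpa [NNReal.coe_sum] using this
  exact h2.trans hnorm.le

end SpectralLemma

private lemma prodBound {ι : Type*} [DecidableEq ι] (s : Finset ι) (x : ι → ℝ) :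
    (∑ j ∈ s, |x j|) ≤ 1 →
    |(∏ j ∈ s, (1 - x j)) - (1 - ∑ j ∈ s, x j)| ≤ (∑ j ∈ s, |x j|) ^ 2 := by
  induction s using Finset.induction_on with
  | empty => simp
  | @insert a s ha ih =>
    intro hx
    rw [Finset.sum_insert ha] at hx
    have hT1 : ∑ j ∈ s, |x j| ≤ 1 := by
      have := abs_nonneg (x a); linarith
    have hD := ih hT1
    rw [Finset.prod_insert ha, Finset.sum_insert ha, Finset.sum_insert ha]
    set T := ∑ j ∈ s, |x j| with hT
    set P := ∏ j ∈ s, (1 - x j) with hP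
    have hTnn : 0 ≤ T := Finset.sum_nonneg fun j _ => abs_nonneg _
    have hSabs : |∑ j ∈ s, x j| ≤ T := Finset.abs_sum_le_sum_abs _ _
    have hkey : (1 - x a) * P - (1 - (x a + ∑ j ∈ s, x j))
        = (P - (1 - ∑ j ∈ s, x j)) - x a * (P - 1) := by ring
    rw [hkey]
    have hP1 : |P - 1| ≤ T ^ 2 + T := by
      have : P - 1 = (P - (1 - ∑ j ∈ s, x j)) + (- ∑ j ∈ s, x j) := by ring
      rw [this]
      calc |(P - (1 - ∑ j ∈ s, x j)) + (- ∑ j ∈ s, x j)|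
          ≤ |P - (1 - ∑ j ∈ s, x j)| + |(- ∑ j ∈ s, x j)| := abs_add_le _ _
        _ ≤ T ^ 2 + T := by rw [abs_neg]; exact add_le_add hD hSabs
    have htnn : 0 ≤ |x a| := abs_nonneg _
    calc |(P - (1 - ∑ j ∈ s, x j)) - x a * (P - 1)|
        ≤ |P - (1 - ∑ j ∈ s, x j)| + |x a * (P - 1)| := abs_sub _ _
      _ ≤ T ^ 2 + |x a| * (T ^ 2 + T) := by
          rw [abs_mul]
          exact add_le_add hD (mul_le_mul_of_nonneg_left hP1 htnn)
      _ ≤ (|x a| + T) ^ 2 := by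
          have hq : |x a| * T ^ 2 ≤ |x a| * T :=
            mul_le_mul_of_nonneg_left (by nlinarith) htnn
          nlinarith [mul_nonneg htnn htnn]

private lemma stepBound (N : ℕ) (μ : ℝ) (hμ1 : μ ≤ 1)
    (lm : Fin N → Fin N → ℝ) (hlm : ∀ i j, lm i j ∈ Set.Icc (0:ℝ) 1)
    (p : Fin N → ℝ) (c : ℝ) (hp : ∀ j, |p j| ≤ c) (hNc : (N:ℝ) * c ≤ 1) (i : Fin N) :
    |sisMap N μ lm p i| ≤ (1 - μ) * |p i| + (∑ j, lm i j * |p j|) + 3 * N ^ 2 * c ^ 2 := by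
  have hN1 : (1:ℝ) ≤ N := by exact_mod_cast i.pos
  have hc0 : 0 ≤ c := le_trans (abs_nonneg _) (hp i)
  have hc1 : c ≤ 1 := by nlinarith
  set T := ∑ j, lm i j * p j with hT
  set Q := ∏ j : Fin N, (1 - lm i j * p j) with hQ
  have habs : ∀ j, |lm i j * p j| = lm i j * |p j| := fun j => by
    rw [abs_mul, abs_of_nonneg (hlm i j).1]
  have hsum_le : ∑ j, lm i j * |p j| ≤ N * c := by
    calc ∑ j, lm i j * |p j| ≤ ∑ _j : Fin N, c := by
          refine Finset.sum_le_sum fun j _ => ?_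
          have h1 := (hlm i j).1
          have h2 := (hlm i j).2
          nlinarith [abs_nonneg (p j), hp j]
      _ = N * c := by simp [Finset.sum_const, Finset.card_univ, nsmul_eq_mul]
  have hsum1 : ∑ j, |lm i j * p j| ≤ 1 := by
    rw [Finset.sum_congr rfl fun j _ => habs j]
    exact hsum_le.trans hNc
  have hDb := prodBound Finset.univ (fun j => lm i j * p j) hsum1
  set D := Q - (1 - T) with hDdef
  have hD : |D| ≤ (N * c) ^ 2 := by
    refine le_trans hDb ?_
    have h1 : ∑ j, |lm i j * p j| ≤ N * c := by
      rw [Finset.sum_congr rfl fun j _ => habs j]; exact hsum_le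
    have h2 : 0 ≤ ∑ j, |lm i j * p j| := Finset.sum_nonneg fun j _ => abs_nonneg _
    exact pow_le_pow_left₀ h2 h1 2
  have hTabs : |T| ≤ ∑ j, lm i j * |p j| := by
    refine le_trans (Finset.abs_sum_le_sum_abs _ _) ?_
    rw [Finset.sum_congr rfl fun j _ => habs j]
  have hTc : |T| ≤ N * c := hTabs.trans hsum_le
  have hg : sisMap N μ lm p i = (1 - μ) * p i + T - D + (-(p i) * T) + p i * D := by
    have hQD : Q = 1 - T + D := by rw [hDdef]; ring
    show 1 - μ * p i - (1 - p i) * Q = _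
    rw [hQD]; ring
  rw [hg]
  have step5 : |(1 - μ) * p i + T - D + (-(p i) * T) + p i * D|
      ≤ |(1 - μ) * p i| + |T| + |D| + |(-(p i)) * T| + |p i * D| := by
    calc |(1 - μ) * p i + T - D + (-(p i) * T) + p i * D|
        ≤ |(1 - μ) * p i + T - D + (-(p i) * T)| + |p i * D| := abs_add_le _ _
      _ ≤ (|(1 - μ) * p i + T - D| + |(-(p i)) * T|) + |p i * D| :=
          by linarith [abs_add_le ((1 - μ) * p i + T - D) (-(p i) * T)]
      _ ≤ ((|(1 - μ) * p i + T| + |D|) + |(-(p i)) * T|) + |p i * D| :=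
          by linarith [abs_sub ((1 - μ) * p i + T) D]
      _ ≤ (((|(1 - μ) * p i| + |T|) + |D|) + |(-(p i)) * T|) + |p i * D| :=
          by linarith [abs_add_le ((1 - μ) * p i) T]
  refine le_trans step5 ?_
  have e1 : |(1 - μ) * p i| = (1 - μ) * |p i| := by
    rw [abs_mul, abs_of_nonneg (by linarith : (0:ℝ) ≤ 1 - μ)]
  have e2 : |(-(p i)) * T| ≤ c * (N * c) := by
    rw [abs_mul, abs_neg]
    exact mul_le_mul (hp i) hTc (abs_nonneg _) hc0
  have e3 : |p i * D| ≤ c * (N * c) ^ 2 := by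
    rw [abs_mul]
    exact mul_le_mul (hp i) hD (abs_nonneg _) hc0
  have hcc : c * (N * c) ^ 2 ≤ N ^ 2 * c ^ 2 := by nlinarith
  have hcc2 : c * (N * c) ≤ N ^ 2 * c ^ 2 := by nlinarith
  have hD' : |D| ≤ N ^ 2 * c ^ 2 := by nlinarith [hD]
  rw [e1]
  linarith [hTabs, e2, e3]

set_option maxHeartbeats 2000000 in
theorem stmt8 (N l : ℕ) (hl : 1 ≤ l) (μ : ℝ) (hμ : μ ∈ Set.Icc (0 : ℝ) 1)
    (lam : ℕ → Fin N → Fin N → ℝ)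
    (hlam : ∀ τ i j, lam τ i j ∈ Set.Icc (0 : ℝ) 1)
    (hdiag : ∀ τ i, lam τ i i = 0)
    (hper : ∀ τ, lam (τ + l) = lam τ)
    (hρ : specRad (((List.range l).reverse.map
        (fun τ => (1 - μ) • (1 : Matrix (Fin N) (Fin N) ℝ) + Matrix.of (lam τ))).prod) < 1) :
    ∃ U ∈ 𝓝 (0 : Fin N → ℝ), ∀ p : ℕ → (Fin N → ℝ), p 0 ∈ U →
      (∀ τ, p (τ + 1) = sisMap N μ (lam τ) (p τ)) →
      Tendsto p atTop (𝓝 0) := by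
  obtain ⟨hμ0, hμ1⟩ := hμ
  rcases Nat.eq_zero_or_pos N with hN0 | hNpos
  · subst hN0
    refine ⟨Set.univ, Filter.univ_mem, fun p _ _ => ?_⟩
    have hp : p = fun _ => 0 := funext fun n => funext fun i => i.elim0
    rw [hp]
    exact tendsto_const_nhds
  have hN1 : (1:ℝ) ≤ N := by exact_mod_cast hNpos
  set S : ℕ → Matrix (Fin N) (Fin N) ℝ :=
    fun τ => (1 - μ) • (1 : Matrix (Fin N) (Fin N) ℝ) + Matrix.of (lam τ) with hSdef
  have hSapp : ∀ τ (q : Fin N → ℝ) i, (S τ *ᵥ q) i = (1 - μ) * q i + ∑ j, lam τ i j * q j := by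
    intro τ q i
    rw [show S τ = (1 - μ) • (1 : Matrix (Fin N) (Fin N) ℝ) + Matrix.of (lam τ) from rfl,
      Matrix.add_mulVec, Matrix.smul_mulVec, Matrix.one_mulVec]
    simp [Matrix.mulVec, dotProduct]
  have hSnn : ∀ τ i j, 0 ≤ S τ i j := by
    intro τ i j
    have := (hlam τ i j).1
    simp only [hSdef, Matrix.add_apply, Matrix.smul_apply, Matrix.of_apply, smul_eq_mul]
    rcases eq_or_ne i j with h | h
    · simp [h, Matrix.one_apply]; linarith [(hlam τ j j).1]
    · simp [Matrix.one_apply_ne h]; linarith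
  have hSrow : ∀ τ i, ∑ j, S τ i j ≤ 2 * N := by
    intro τ i
    have : ∀ j, S τ i j ≤ 2 := by
      intro j
      have := (hlam τ i j).2
      simp only [hSdef, Matrix.add_apply, Matrix.smul_apply, Matrix.of_apply, smul_eq_mul]
      rcases eq_or_ne i j with h | h
      · simp [h, Matrix.one_apply]; linarith [(hlam τ j j).2]
      · simp [Matrix.one_apply_ne h]; linarith
    calc ∑ j, S τ i j ≤ ∑ _j : Fin N, (2:ℝ) := Finset.sum_le_sum fun j _ => this j
      _ = 2 * N := by simp [Finset.sum_const, Finset.card_univ, nsmul_eq_mul]; ring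
  set A : ℕ → Matrix (Fin N) (Fin N) ℝ := fun k => ((List.range k).reverse.map S).prod
    with hAdef
  have hρ' : specRad (A l) < 1 := hρ
  have hA0 : A 0 = 1 := by simp [hAdef]
  have hAsucc : ∀ k, A (k + 1) = S k * A k := by
    intro k
    simp [hAdef, List.range_succ]
  have hAnn : ∀ k i j, 0 ≤ A k i j := by
    intro k
    induction k with
    | zero => intro i j; rw [hA0]; rcases eq_or_ne i j with h | h
              · simp [h, Matrix.one_apply]
              · simp [Matrix.one_apply_ne h]
    | succ k ih =>
        intro i j
        rw [hAsucc, Matrix.mul_apply]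
        exact Finset.sum_nonneg fun k' _ => mul_nonneg (hSnn _ _ _) (ih _ _)
  obtain ⟨r, hr0, hr1, m, hm1, hrowm⟩ := L1 (A l) hρ'
  have hPnn : ∀ k i j, 0 ≤ ((A l) ^ k) i j := by
    intro k
    induction k with
    | zero => intro i j; rcases eq_or_ne i j with h | h
              · simp [h, Matrix.one_apply]
              · simp [Matrix.one_apply_ne h]
    | succ k ih =>
        intro i j
        rw [pow_succ, Matrix.mul_apply]
        exact Finset.sum_nonneg fun k' _ => mul_nonneg (ih _ _) (hAnn l _ _)
  have hrne : r ≠ 0 := ne_of_gt hr0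
  set u : ℕ → Fin N → ℝ := fun k => ((A l) ^ k) *ᵥ (fun _ => (1:ℝ)) with hudef
  have hu0 : ∀ i, u 0 i = 1 := by
    intro i; simp [hudef, Matrix.one_mulVec]
  have hunn : ∀ k i, 0 ≤ u k i := by
    intro k i
    simp only [hudef, Matrix.mulVec, dotProduct, mul_one]
    exact Finset.sum_nonneg fun j _ => hPnn k i j
  have hum : ∀ i, u m i ≤ r ^ m := by
    intro i
    have h1 : ∑ j, (A l ^ m) i j ≤ r ^ m := by
      have := hrowm i
      rwa [Finset.sum_congr rfl fun j _ => abs_of_nonneg (hPnn m i j)] at this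
    simpa [hudef, Matrix.mulVec, dotProduct] using h1
  set v : Fin N → ℝ := fun i => ∑ k ∈ Finset.range m, r⁻¹ ^ k * u k i with hvdef
  have htermnn : ∀ k i, 0 ≤ r⁻¹ ^ k * u k i := fun k i =>
    mul_nonneg (pow_nonneg (inv_nonneg.mpr hr0.le) _) (hunn k i)
  have hv1 : ∀ i, 1 ≤ v i := by
    intro i
    have h0 : r⁻¹ ^ 0 * u 0 i = 1 := by simp [hu0]
    have h2 := Finset.single_le_sum (f := fun k => r⁻¹ ^ k * u k i)
      (fun k _ => htermnn k i) (Finset.mem_range.mpr (by omega : 0 < m))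
    exact le_trans h0.symm.le h2
  have hvnn : ∀ i, 0 ≤ v i := fun i => le_trans zero_le_one (hv1 i)
  have hu1 : ∀ k i, (∑ x, A l i x * u k x) = u (k + 1) i := by
    intro k i
    have h3 : A l *ᵥ u k = u (k + 1) := by
      show A l *ᵥ (A l ^ k *ᵥ fun _ => 1) = A l ^ (k + 1) *ᵥ fun _ => 1
      rw [Matrix.mulVec_mulVec, ← pow_succ']
    calc (∑ x, A l i x * u k x) = (A l *ᵥ u k) i := rfl
      _ = u (k + 1) i := by rw [h3]
  clear_value S A
  have hvS : ∀ i, (A l *ᵥ v) i ≤ r * v i := by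
    intro i
    have hswap : (A l *ᵥ v) i = ∑ k ∈ Finset.range m, r⁻¹ ^ k * u (k + 1) i := by
      calc (A l *ᵥ v) i = ∑ x, A l i x * ∑ k ∈ Finset.range m, r⁻¹ ^ k * u k x := rfl
        _ = ∑ x, ∑ k ∈ Finset.range m, r⁻¹ ^ k * (A l i x * u k x) := by
            refine Finset.sum_congr rfl fun x _ => ?_
            rw [Finset.mul_sum]
            exact Finset.sum_congr rfl fun k _ => by ring
        _ = ∑ k ∈ Finset.range m, ∑ x, r⁻¹ ^ k * (A l i x * u k x) := Finset.sum_comm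
        _ = ∑ k ∈ Finset.range m, r⁻¹ ^ k * u (k + 1) i := by
            refine Finset.sum_congr rfl fun k _ => ?_
            rw [← Finset.mul_sum, hu1]
    have hshift : ∑ k ∈ Finset.range m, r⁻¹ ^ k * u (k + 1) i
        = r * (v i + r⁻¹ ^ m * u m i - 1) := by
      have h4 : ∀ k, r⁻¹ ^ k * u (k + 1) i = r * (r⁻¹ ^ (k + 1) * u (k + 1) i) := by
        intro k
        rw [pow_succ]
        field_simp
      rw [Finset.sum_congr rfl fun k _ => h4 k, ← Finset.mul_sum]
      congr 1
      have h5 : ∑ k ∈ Finset.range (m + 1), r⁻¹ ^ k * u k i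
          = (∑ k ∈ Finset.range m, r⁻¹ ^ (k + 1) * u (k + 1) i) + r⁻¹ ^ 0 * u 0 i :=
        Finset.sum_range_succ' _ _
      have h6 : ∑ k ∈ Finset.range (m + 1), r⁻¹ ^ k * u k i
          = (∑ k ∈ Finset.range m, r⁻¹ ^ k * u k i) + r⁻¹ ^ m * u m i :=
        Finset.sum_range_succ _ _
      have h7 : r⁻¹ ^ 0 * u 0 i = 1 := by simp [hu0]
      have hvi : v i = ∑ k ∈ Finset.range m, r⁻¹ ^ k * u k i := rfl
      rw [hvi]
      linarith
    rw [hswap, hshift]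
    have h8 : r⁻¹ ^ m * u m i ≤ 1 := by
      calc r⁻¹ ^ m * u m i ≤ r⁻¹ ^ m * r ^ m :=
            mul_le_mul_of_nonneg_left (hum i) (pow_nonneg (inv_nonneg.mpr hr0.le) _)
        _ = 1 := by rw [← mul_pow]; simp [inv_mul_cancel₀ hrne]
    nlinarith
  clear_value u v
  -- W bound
  set W : ℝ := ∑ k ∈ Finset.range (l + 1), ∑ i, (A k *ᵥ v) i with hWdef
  have hAvnn : ∀ k i, 0 ≤ (A k *ᵥ v) i := by
    intro k i
    simp only [Matrix.mulVec, dotProduct]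
    exact Finset.sum_nonneg fun j _ => mul_nonneg (hAnn k i j) (hvnn j)
  have hWk : ∀ k, k ≤ l → ∀ i, (A k *ᵥ v) i ≤ W := by
    intro k hk i
    have h1 : (A k *ᵥ v) i ≤ ∑ i, (A k *ᵥ v) i :=
      Finset.single_le_sum (fun j _ => hAvnn k j) (Finset.mem_univ i)
    have h2 : ∑ i, (A k *ᵥ v) i ≤ W :=
      Finset.single_le_sum (f := fun k => ∑ i, (A k *ᵥ v) i)
        (fun k _ => Finset.sum_nonneg fun j _ => hAvnn k j)
        (Finset.mem_range.mpr (by omega))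
    exact h1.trans h2
  have hW1 : 1 ≤ W := by
    have i : Fin N := ⟨0, hNpos⟩
    have h1 := hWk 0 (by omega) i
    rw [hA0, Matrix.one_mulVec] at h1
    linarith [hv1 i]
  clear_value W
  -- error recursion E
  set cK : ℝ := 3 * (N:ℝ) ^ 2 with hcK
  set cM : ℝ := 2 * (N:ℝ) with hcM
  have hcK0 : 0 ≤ cK := by positivity
  have hcM1 : 1 ≤ cM := by rw [hcM]; linarith
  clear_value cK cM
  obtain ⟨E, hE0, hEs⟩ : ∃ E : ℕ → ℝ, E 0 = 0 ∧
      ∀ k, E (k + 1) = cM * E k + cK * (W + E k) ^ 2 :=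
    ⟨fun k => Nat.rec (0 : ℝ) (fun _ Ek => cM * Ek + cK * (W + Ek) ^ 2) k, rfl, fun _ => rfl⟩
  have hEnn : ∀ k, 0 ≤ E k := by
    intro k
    induction k with
    | zero => rw [hE0]
    | succ k ih =>
        rw [hEs]
        have h1 : 0 ≤ (W + E k) ^ 2 := sq_nonneg _
        nlinarith
  have hEmono : ∀ j k, j ≤ k → E j ≤ E k := by
    have hstep : ∀ k, E k ≤ E (k + 1) := by
      intro k
      rw [hEs]
      nlinarith [hEnn k, sq_nonneg (W + E k), mul_nonneg (sub_nonneg.mpr hcM1) (hEnn k)]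
    intro j k hjk
    exact monotone_nat_of_le_succ hstep hjk
  set Pb : ℝ := W + E l with hPbdef
  have hPb1 : 1 ≤ Pb := by rw [hPbdef]; linarith [hEnn l]
  clear_value Pb
  set θ : ℝ := (1 + r) / 2 with hθdef
  have hθ0 : 0 < θ := by rw [hθdef]; linarith
  have hθ1 : θ < 1 := by rw [hθdef]; linarith
  clear_value θ
  have hNR : (0:ℝ) < N := by exact_mod_cast hNpos
  obtain ⟨δ, hδ0, hδ1, hδNP, hδE⟩ :
      ∃ δ : ℝ, 0 < δ ∧ δ ≤ 1 ∧ (N:ℝ) * (δ * Pb) ≤ 1 ∧ δ * E l ≤ (1 - r) / 2 := by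
    have hEl0 : 0 ≤ E l := hEnn l
    have hNP0 : 0 < (N:ℝ) * Pb := by nlinarith
    have hden0 : (0:ℝ) < 2 * (E l + 1) := by nlinarith
    refine ⟨min (min 1 (1 / ((N:ℝ) * Pb))) ((1 - r) / (2 * (E l + 1))), ?_, ?_, ?_, ?_⟩
    · exact lt_min (lt_min one_pos (div_pos one_pos hNP0)) (div_pos (by linarith) hden0)
    · exact le_trans (min_le_left _ _) (min_le_left _ _)
    · have h1 : min (min 1 (1 / ((N:ℝ) * Pb))) ((1 - r) / (2 * (E l + 1)))
          ≤ 1 / ((N:ℝ) * Pb) := le_trans (min_le_left _ _) (min_le_right _ _)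
      have h2 := mul_le_mul_of_nonneg_right h1 hNP0.le
      have h2' : (1 / ((N:ℝ) * Pb)) * ((N:ℝ) * Pb) = 1 := by field_simp
      rw [h2'] at h2
      calc (N:ℝ) * ((min (min 1 (1 / ((N:ℝ) * Pb))) ((1 - r) / (2 * (E l + 1)))) * Pb)
          = (min (min 1 (1 / ((N:ℝ) * Pb))) ((1 - r) / (2 * (E l + 1)))) * ((N:ℝ) * Pb) := by
            ring
        _ ≤ 1 := h2
    · have h1 : min (min 1 (1 / ((N:ℝ) * Pb))) ((1 - r) / (2 * (E l + 1)))
          ≤ (1 - r) / (2 * (E l + 1)) := min_le_right _ _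
      have h3 := mul_le_mul_of_nonneg_right h1 hEl0
      have h4 : ((1 - r) / (2 * (E l + 1))) * E l ≤ (1 - r) / 2 := by
        rw [div_mul_eq_mul_div, div_le_div_iff₀ hden0 (by norm_num)]
        nlinarith
      linarith
  refine ⟨Metric.ball 0 δ, Metric.ball_mem_nhds 0 hδ0, ?_⟩
  intro p hp0 hrec
  have hshift : ∀ k τ, lam (k * l + τ) = lam τ := by
    intro k
    induction k with
    | zero => simp
    | succ k ih =>
        intro τ
        have h1 : (k + 1) * l + τ = (k * l + τ) + l := by ring
        rw [h1, hper, ih]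
  -- key inner induction over one period
  have key : ∀ t, (∀ τ, lam (t + τ) = lam τ) → ∀ c, 0 < c → c ≤ δ →
      (∀ i, |p t i| ≤ c * v i) →
      ∀ k, k ≤ l → ∀ i, |p (t + k) i| ≤ c * (A k *ᵥ v) i + c ^ 2 * E k := by
    intro t ht c hc0 hcδ hpt k
    induction k with
    | zero =>
        intro _ i
        rw [hA0, Matrix.one_mulVec, hE0]
        simpa using hpt i
    | succ k ih =>
        intro hk1 i
        have hkl : k ≤ l := by omega
        have ihk := ih (by omega)
        set cc : ℝ := c * (W + E k) with hccdef
        have hEkl : E k ≤ E l := hEmono k l hkl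
        have hc1 : c ≤ 1 := hcδ.trans hδ1
        have hub : ∀ j, |p (t + k) j| ≤ cc := by
          intro j
          have h1 := ihk j
          have h2 : (A k *ᵥ v) j ≤ W := hWk k hkl j
          have h3 : c ^ 2 * E k ≤ c * E k := by
            nlinarith [hEnn k, mul_nonneg (mul_nonneg hc0.le (sub_nonneg.mpr hc1)) (hEnn k)]
          have h4 : c * (A k *ᵥ v) j ≤ c * W := mul_le_mul_of_nonneg_left h2 hc0.le
          rw [hccdef]
          nlinarith
        have hccδ : cc ≤ δ * Pb := by
          rw [hccdef, hPbdef]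
          have h5 : W + E k ≤ W + E l := by linarith
          nlinarith [hEnn k]
        have hNcc : (N:ℝ) * cc ≤ 1 := by
          have := mul_le_mul_of_nonneg_left hccδ hNR.le
          linarith [hδNP]
        have hpstep : p (t + k + 1) = sisMap N μ (lam k) (p (t + k)) := by
          rw [hrec (t + k), ht k]
        have hsb := stepBound N μ hμ1 (lam k) (hlam k) (p (t + k)) cc hub hNcc i
        rw [← hpstep] at hsb
        have hSveq : (1 - μ) * |p (t + k) i| + (∑ j, lam k i j * |p (t + k) j|)
            = (S k *ᵥ fun j => |p (t + k) j|) i := (hSapp k (fun j => |p (t + k) j|) i).symm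
        have hmono : (S k *ᵥ fun j => |p (t + k) j|) i
            ≤ (S k *ᵥ fun j => c * (A k *ᵥ v) j + c ^ 2 * E k) i := by
          simp only [Matrix.mulVec, dotProduct]
          exact Finset.sum_le_sum fun j _ => mul_le_mul_of_nonneg_left (ihk j) (hSnn k i j)
        have hexp : (S k *ᵥ fun j => c * (A k *ᵥ v) j + c ^ 2 * E k) i
            = c * (S k *ᵥ (A k *ᵥ v)) i + c ^ 2 * E k * (∑ j, S k i j) := by
          simp only [Matrix.mulVec, dotProduct]
          rw [Finset.mul_sum, Finset.mul_sum, ← Finset.sum_add_distrib]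
          exact Finset.sum_congr rfl fun j _ => by ring
        have hAk1 : (S k *ᵥ (A k *ᵥ v)) = (A (k + 1) *ᵥ v) := by
          rw [Matrix.mulVec_mulVec, ← hAsucc]
        have hrowk : (∑ j, S k i j) ≤ cM := hSrow k i
        have hfin2 : (S k *ᵥ fun j => |p (t + k) j|) i
            ≤ c * (A (k + 1) *ᵥ v) i + c ^ 2 * E k * cM := by
          refine le_trans hmono ?_
          rw [hexp, hAk1]
          have h6 : c ^ 2 * E k * (∑ j, S k i j) ≤ c ^ 2 * E k * cM :=
            mul_le_mul_of_nonneg_left hrowk (mul_nonneg (sq_nonneg c) (hEnn k))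
          linarith
        have hccsq : (3:ℝ) * (N:ℝ) ^ 2 * cc ^ 2 = c ^ 2 * (cK * (W + E k) ^ 2) := by
          rw [hccdef, hcK]; ring
        have hfin : |p (t + (k + 1)) i|
            ≤ c * (A (k + 1) *ᵥ v) i + c ^ 2 * (cM * E k + cK * (W + E k) ^ 2) := by
          have h7 : |p (t + k + 1) i| ≤ (S k *ᵥ fun j => |p (t + k) j|) i
              + 3 * (N:ℝ) ^ 2 * cc ^ 2 := by
            rw [← hSveq]; exact hsb
          have h8 : t + (k + 1) = t + k + 1 := rfl
          rw [h8]
          calc |p (t + k + 1) i| ≤ (S k *ᵥ fun j => |p (t + k) j|) i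
                + 3 * (N:ℝ) ^ 2 * cc ^ 2 := h7
            _ ≤ c * (A (k + 1) *ᵥ v) i + c ^ 2 * E k * cM
                + c ^ 2 * (cK * (W + E k) ^ 2) := by rw [hccsq] at *; linarith
            _ = c * (A (k + 1) *ᵥ v) i + c ^ 2 * (cM * E k + cK * (W + E k) ^ 2) := by ring
        rw [hEs]
        exact hfin
  -- contraction over one full period
  have keyθ : ∀ t, (∀ τ, lam (t + τ) = lam τ) → ∀ c, 0 < c → c ≤ δ →
      (∀ i, |p t i| ≤ c * v i) → ∀ i, |p (t + l) i| ≤ (θ * c) * v i := by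
    intro t ht c hc0 hcδ hpt i
    have h1 := key t ht c hc0 hcδ hpt l le_rfl i
    have h2 : (A l *ᵥ v) i ≤ r * v i := hvS i
    have h3 : c * E l ≤ (1 - r) / 2 :=
      le_trans (mul_le_mul_of_nonneg_right hcδ (hEnn l)) hδE
    have h4 : c ^ 2 * E l ≤ c * ((1 - r) / 2) := by nlinarith [hEnn l]
    have h5 : c * ((1 - r) / 2) ≤ c * ((1 - r) / 2) * v i := by
      nlinarith [mul_nonneg (mul_nonneg hc0.le (by linarith : (0:ℝ) ≤ (1 - r) / 2))
        (sub_nonneg.mpr (hv1 i))]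
    have h6 : c * (A l *ᵥ v) i ≤ c * (r * v i) := mul_le_mul_of_nonneg_left h2 hc0.le
    calc |p (t + l) i| ≤ c * (A l *ᵥ v) i + c ^ 2 * E l := h1
      _ ≤ c * (r * v i) + c * ((1 - r) / 2) * v i := by linarith
      _ = (θ * c) * v i := by rw [hθdef]; ring
  -- initial condition
  have hstart : ∀ i, |p 0 i| ≤ δ * v i := by
    intro i
    have h1 : dist (p 0) 0 < δ := Metric.mem_ball.mp hp0
    have h2 : |p 0 i| ≤ dist (p 0) 0 := by
      calc |p 0 i| = ‖(p 0) i‖ := rfl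
        _ ≤ ‖p 0‖ := norm_le_pi_norm (p 0) i
        _ = dist (p 0) 0 := (dist_zero_right (p 0)).symm
    nlinarith [hv1 i]
  -- outer induction over periods
  have outer : ∀ k i, |p (k * l) i| ≤ (δ * θ ^ k) * v i := by
    intro k
    induction k with
    | zero => intro i; simpa using hstart i
    | succ k ih =>
        intro i
        have hc0 : 0 < δ * θ ^ k := by positivity
        have hθk1 : θ ^ k ≤ 1 := pow_le_one₀ hθ0.le hθ1.le
        have hcδ : δ * θ ^ k ≤ δ := by nlinarith
        have h1 := keyθ (k * l) (hshift k) (δ * θ ^ k) hc0 hcδ ih i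
        have heq : (k + 1) * l = k * l + l := by ring
        rw [heq]
        calc |p (k * l + l) i| ≤ (θ * (δ * θ ^ k)) * v i := h1
          _ = (δ * θ ^ (k + 1)) * v i := by ring
  -- global bound
  have hl0 : 0 < l := hl
  have bound : ∀ n i, |p n i| ≤ δ * θ ^ (n / l) * Pb := by
    intro n i
    have hmod : n % l ≤ l := le_of_lt (Nat.mod_lt n hl0)
    have hdm : n / l * l + n % l = n := Nat.div_add_mod' n l
    have hc0 : 0 < δ * θ ^ (n / l) := by positivity
    have hθk1 : θ ^ (n / l) ≤ 1 := pow_le_one₀ hθ0.le hθ1.le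
    have hcδ : δ * θ ^ (n / l) ≤ δ := by nlinarith
    have h1 := key (n / l * l) (hshift (n / l)) (δ * θ ^ (n / l)) hc0 hcδ
      (outer (n / l)) (n % l) hmod i
    rw [hdm] at h1
    have h2 : (A (n % l) *ᵥ v) i ≤ W := hWk _ hmod i
    have h3 : E (n % l) ≤ E l := hEmono _ _ hmod
    have hc1 : δ * θ ^ (n / l) ≤ 1 := le_trans hcδ hδ1
    have h4 : (δ * θ ^ (n / l)) * (A (n % l) *ᵥ v) i ≤ (δ * θ ^ (n / l)) * W :=
      mul_le_mul_of_nonneg_left h2 hc0.le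
    have h5 : (δ * θ ^ (n / l)) ^ 2 * E (n % l) ≤ (δ * θ ^ (n / l)) * E l := by
      nlinarith [hEnn (n % l), mul_le_mul_of_nonneg_left h3 hc0.le,
        mul_nonneg (mul_nonneg hc0.le (sub_nonneg.mpr hc1)) (hEnn (n % l))]
    calc |p n i| ≤ (δ * θ ^ (n / l)) * (A (n % l) *ᵥ v) i
          + (δ * θ ^ (n / l)) ^ 2 * E (n % l) := h1
      _ ≤ (δ * θ ^ (n / l)) * W + (δ * θ ^ (n / l)) * E l := by linarith
      _ = δ * θ ^ (n / l) * Pb := by rw [hPbdef]; ring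
  -- conclude convergence
  rw [Metric.tendsto_atTop]
  intro ε hε
  have hδP0 : 0 < δ * Pb := by nlinarith
  obtain ⟨k0, hk0⟩ := exists_pow_lt_of_lt_one (div_pos hε hδP0) hθ1
  refine ⟨k0 * l, fun n hn => ?_⟩
  have hdiv : k0 ≤ n / l := (Nat.le_div_iff_mul_le hl0).mpr hn
  have hθle : θ ^ (n / l) ≤ θ ^ k0 := pow_le_pow_of_le_one hθ0.le hθ1.le hdiv
  have hb : ‖p n‖ ≤ δ * θ ^ (n / l) * Pb := by
    rw [pi_norm_le_iff_of_nonneg (by positivity)]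
    intro i
    exact bound n i
  have hk0' : θ ^ k0 * (δ * Pb) < ε := by
    rw [div_eq_mul_inv] at hk0
    calc θ ^ k0 * (δ * Pb) < (ε * (δ * Pb)⁻¹) * (δ * Pb) :=
        mul_lt_mul_of_pos_right hk0 hδP0
      _ = ε := by field_simp
  rw [dist_zero_right]
  have h9 : δ * θ ^ (n / l) * Pb ≤ θ ^ k0 * (δ * Pb) := by nlinarith [pow_nonneg hθ0.le (n / l)]
  linarith
end

section
/- Let S_τ ∈ ℝ^{N×N} for τ = 0, …, l-1 have all entries nonnegative, and suppose a sequence p_τ ∈ ℝ^N of nonnegative vectors satisfies the componentwise inequality p_{τ+1} ≤ S_{τ mod l} p_τ for all τ ≥ 0. If the spectral radius of S = S_{l-1} ⋯ S_0 is strictly less than 1, then p_τ → 0 as τ → ∞. -/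
open Matrix Filter Topology

section Aux

attribute [local instance] Matrix.linftyOpNormedAddCommGroup Matrix.linftyOpNormedRing
  Matrix.linftyOpNormedAlgebra

lemma norm_map_ofReal {n : Type*} [Fintype n] [DecidableEq n] (M : Matrix n n ℝ) :
    ‖M.map (Complex.ofReal ·)‖ = ‖M‖ := by
  rw [← coe_nnnorm, ← coe_nnnorm]
  congr 1
  rw [Matrix.linfty_opNNNorm_def, Matrix.linfty_opNNNorm_def]
  congr 1
  ext i
  congr 1
  ext j
  simp [Matrix.map_apply]

lemma pow_norm_tendsto_zero {n : ℕ} [NeZero n] (M : Matrix (Fin n) (Fin n) ℝ)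
    (h : specRad M < 1) : Tendsto (fun k : ℕ => ‖M ^ k‖) atTop (𝓝 0) := by
  haveI : CompleteSpace (Matrix (Fin n) (Fin n) ℂ) := FiniteDimensional.complete ℂ _
  set A : Matrix (Fin n) (Fin n) ℂ := M.map (Complex.ofReal ·) with hA
  have hne : (spectrum ℂ A).Nonempty := spectrum.nonempty A
  have hbdd : BddAbove ((fun z : ℂ => ‖z‖) '' spectrum ℂ A) :=
    ((spectrum.isCompact A).image continuous_norm).bddAbove
  have hle : ∀ z ∈ spectrum ℂ A, ‖z‖ ≤ specRad M := fun z hz =>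
    le_csSup hbdd ⟨z, hz, rfl⟩
  obtain ⟨z₀, hz₀⟩ := hne
  have hs0 : 0 ≤ specRad M := le_trans (norm_nonneg z₀) (hle z₀ hz₀)
  set s := specRad M with hs
  set r : NNReal := ⟨(s + 1) / 2, by positivity⟩ with hr
  have hrv : (r : ℝ) = (s + 1) / 2 := rfl
  have hr1 : (r : ℝ) < 1 := by rw [hrv]; linarith
  have hσ : ∀ z ∈ spectrum ℂ A, ‖z‖₊ < r := by
    intro z hz
    rw [← NNReal.coe_lt_coe]
    have : ‖z‖ = ‖z‖ := rfl
    rw [coe_nnnorm, this, hrv]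
    have := hle z hz
    linarith
  have hsr : spectralRadius ℂ A < (r : ENNReal) :=
    spectrum.spectralRadius_lt_of_forall_lt_of_nonempty (spectrum.nonempty A) hσ
  have hgel := spectrum.pow_nnnorm_pow_one_div_tendsto_nhds_spectralRadius A
  have hev : ∀ᶠ k : ℕ in atTop, (‖A ^ k‖₊ : ENNReal) ^ (1 / (k : ℝ)) < (r : ENNReal) :=
    hgel.eventually_lt_const hsr
  have hev2 : ∀ᶠ k : ℕ in atTop, ‖M ^ k‖ ≤ (r : ℝ) ^ k := by
    filter_upwards [hev, eventually_ge_atTop 1] with k hk hk1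
    have hk0 : (k : ℝ) ≠ 0 := Nat.cast_ne_zero.mpr (by omega)
    have h2 : ((‖A ^ k‖₊ : ENNReal) ^ (1 / (k : ℝ))) ^ (k : ℝ) < ((r : ENNReal)) ^ (k : ℝ) :=
      ENNReal.rpow_lt_rpow hk (by positivity)
    rw [← ENNReal.rpow_mul, one_div_mul_cancel hk0, ENNReal.rpow_one] at h2
    rw [ENNReal.rpow_natCast, ← ENNReal.coe_pow] at h2
    have h4 : ‖A ^ k‖₊ < r ^ k := by exact_mod_cast h2
    have h5 : ‖A ^ k‖ ≤ (r : ℝ) ^ k := by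
      exact_mod_cast (NNReal.coe_lt_coe.mpr h4).le
    have hAk : A ^ k = (M ^ k).map (Complex.ofReal ·) := by
      exact (map_pow (Complex.ofRealHom.mapMatrix) M k).symm
    rw [hAk, norm_map_ofReal] at h5
    exact h5
  have hr0 : 0 ≤ (r : ℝ) := r.2
  refine squeeze_zero' (Eventually.of_forall fun k => norm_nonneg _) hev2 ?_
  exact tendsto_pow_atTop_nhds_zero_of_lt_one hr0 hr1


theorem stmt11 (N l : ℕ) (hl : 1 ≤ l) (S : ℕ → Matrix (Fin N) (Fin N) ℝ)
    (hS : ∀ τ < l, ∀ i j, 0 ≤ S τ i j)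
    (p : ℕ → (Fin N → ℝ))
    (hp_nonneg : ∀ τ i, 0 ≤ p τ i)
    (hp : ∀ τ i, p (τ + 1) i ≤ (S (τ % l)).mulVec (p τ) i)
    (hρ : specRad (((List.range l).reverse.map S).prod) < 1) :
    Tendsto p atTop (𝓝 0) := by
  rcases Nat.eq_zero_or_pos N with hN | hN
  · subst hN
    have hp0 : p = fun _ => 0 := funext fun τ => funext fun i => i.elim0
    rw [hp0]
    exact tendsto_const_nhds
  haveI : NeZero N := ⟨hN.ne'⟩
  set P : Matrix (Fin N) (Fin N) ℝ := ((List.range l).reverse.map S).prod with hPdef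
  set T : ℕ → Matrix (Fin N) (Fin N) ℝ := fun r => ((List.range r).reverse.map S).prod
    with hTdef
  set W : ℕ → Matrix (Fin N) (Fin N) ℝ :=
    fun τ => Nat.rec 1 (fun t Mt => S (t % l) * Mt) τ with hWdef
  have hW0 : W 0 = 1 := rfl
  have hWs : ∀ τ, W (τ + 1) = S (τ % l) * W τ := fun τ => rfl
  have hT0 : T 0 = 1 := by simp [hTdef]
  have hTs : ∀ r, T (r + 1) = S r * T r := by
    intro r
    simp [hTdef, List.range_succ]
  have hTl : T l = P := rfl
  -- key pointwise bound
  have key : ∀ τ i, p τ i ≤ (W τ *ᵥ p 0) i := by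
    intro τ
    induction τ with
    | zero => intro i; rw [hW0, Matrix.one_mulVec]
    | succ τ ih =>
      intro i
      refine (hp τ i).trans ?_
      rw [hWs, ← Matrix.mulVec_mulVec]
      simp only [Matrix.mulVec, dotProduct]
      refine Finset.sum_le_sum fun j _ => ?_
      exact mul_le_mul_of_nonneg_left (ih j) (hS (τ % l) (Nat.mod_lt _ hl) i j)
  -- structure of W
  have subT : ∀ m, m % l = 0 → ∀ r, r ≤ l → W (m + r) = T r * W m := by
    intro m hm r hr
    induction r with
    | zero => rw [hT0, one_mul, Nat.add_zero]
    | succ r ih =>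
      have hrl : r < l := hr
      have hmod : (m + r) % l = r := by
        rw [Nat.add_mod, hm, Nat.zero_add, Nat.mod_mod_of_dvd r dvd_rfl,
          Nat.mod_eq_of_lt hrl]
      rw [show m + (r + 1) = (m + r) + 1 from rfl, hWs, hmod, ih (le_of_lt hrl), hTs,
        mul_assoc]
  have hWk : ∀ k, W (k * l) = P ^ k := by
    intro k
    induction k with
    | zero => simpa using hW0
    | succ k ih =>
      have : (k + 1) * l = k * l + l := by ring
      rw [this, subT (k * l) (Nat.mul_mod_left k l) l le_rfl, hTl, ih, ← pow_succ']
  -- norms bound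
  set B : ℝ := ∑ r ∈ Finset.range (l + 1), ‖T r‖ with hBdef
  have hTB : ∀ r ≤ l, ‖T r‖ ≤ B := by
    intro r hr
    exact Finset.single_le_sum (fun t _ => norm_nonneg (T t))
      (Finset.mem_range.mpr (by omega))
  have bound : ∀ τ i, p τ i ≤ B * ‖p 0‖ * ‖P ^ (τ / l)‖ := by
    intro τ i
    have hdm : τ / l * l + τ % l = τ := by
      rw [Nat.mul_comm]; exact Nat.div_add_mod τ l
    have hWτ : W τ = T (τ % l) * P ^ (τ / l) := by
      conv_lhs => rw [← hdm]
      rw [subT _ (Nat.mul_mod_left _ _) _ (le_of_lt (Nat.mod_lt _ hl)), hWk]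
    calc p τ i ≤ (W τ *ᵥ p 0) i := key τ i
      _ ≤ ‖W τ *ᵥ p 0‖ :=
          (le_abs_self _).trans ((Real.norm_eq_abs _) ▸ norm_le_pi_norm (W τ *ᵥ p 0) i)
      _ ≤ ‖W τ‖ * ‖p 0‖ := Matrix.linfty_opNorm_mulVec _ _
      _ ≤ (B * ‖P ^ (τ / l)‖) * ‖p 0‖ := by
          refine mul_le_mul_of_nonneg_right ?_ (norm_nonneg _)
          rw [hWτ]
          refine (norm_mul_le _ _).trans ?_
          exact mul_le_mul_of_nonneg_right (hTB _ (le_of_lt (Nat.mod_lt _ hl)))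
            (norm_nonneg _)
      _ = B * ‖p 0‖ * ‖P ^ (τ / l)‖ := by ring
  have hdiv : Tendsto (fun τ : ℕ => τ / l) atTop atTop := by
    apply tendsto_atTop_atTop.mpr
    intro b
    exact ⟨b * l, fun τ hτ => (Nat.le_div_iff_mul_le hl).mpr hτ⟩
  have hPn := pow_norm_tendsto_zero P hρ
  have htend : Tendsto (fun τ : ℕ => B * ‖p 0‖ * ‖P ^ (τ / l)‖) atTop (𝓝 0) := by
    have := (hPn.comp hdiv).const_mul (B * ‖p 0‖)
    simpa using this
  refine tendsto_pi_nhds.mpr fun i => ?_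
  simpa using squeeze_zero (fun τ => hp_nonneg τ i) (fun τ => bound τ i) htend

end Aux
end
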